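/- arXiv:2507.11315 — 2 statements merged into one kernel-verified Lean document; each statement's English description precedes it below -/
import Mathlib

section
/- For |q|<1, |x|<1, the q-binomial theorem holds: (a x; q)_∞ / (x; q)_∞ = ∑_{n=0}^∞ ((a;q)_n / (q;q)_n) x^n. -/
/-!
The series `S(y) = ∑ (a;q)_n/(q;q)_n yⁿ` converges for `‖y‖ < 1` by the ratio test, and the
recurrence `(1 - q^(n+1)) c_(n+1) = (1 - a qⁿ) c_n` of its coefficients `c_n` is the functional equation
`(1 - y) S(y) = (1 - a y) S(q y)`. Iterating it gives `(x;q)_N S(x) = (a x;q)_N S(qᴺ x)`, and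
letting `N → ∞`, where `S(qᴺ x) → S(0) = 1` by dominated convergence, yields
`(x;q)_∞ S(x) = (a x;q)_∞`. The infinite product `(x;q)_∞` does not vanish since no factor does
and `∑ ‖x qᵏ‖ < ∞`.
-/

/-- The finite q-Pochhammer symbol `(a;q)_n = ∏_{j=0}^{n−1}(1 − a q^j)`. -/
def qPoch (a q : ℂ) (n : ℕ) : ℂ := ∏ j ∈ Finset.range n, (1 - a * q ^ j)

open Filter Topology

theorem one_sub_ne_zero_of_norm_lt_one {R : Type*} [SeminormedRing R] [NormOneClass R] {z : R}
    (hz : ‖z‖ < 1) : 1 - z ≠ 0 :=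
  sub_ne_zero.2 fun h => by simp [← h] at hz

theorem one_sub_pow_succ_ne_zero {q : ℂ} (hq : ‖q‖ < 1) (n : ℕ) : 1 - q ^ (n + 1) ≠ 0 :=
  one_sub_ne_zero_of_norm_lt_one <| by
    simpa using pow_lt_one₀ (norm_nonneg q) hq n.succ_ne_zero

theorem norm_pow_mul_le {q : ℂ} (hq : ‖q‖ ≤ 1) (x : ℂ) (n : ℕ) : ‖q ^ n * x‖ ≤ ‖x‖ := by
  rw [norm_mul, norm_pow]
  exact mul_le_of_le_one_left (norm_nonneg x) (pow_le_one₀ (norm_nonneg q) hq)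

theorem qPoch_succ (a q : ℂ) (n : ℕ) : qPoch a q (n + 1) = qPoch a q n * (1 - a * q ^ n) :=
  Finset.prod_range_succ _ _

section InfiniteProduct

variable {q : ℂ} (c : ℂ)

theorem summable_norm_mul_pow (hq : ‖q‖ < 1) : Summable fun k : ℕ => ‖c * q ^ k‖ := by
  simpa [norm_mul, norm_pow] using
    (summable_geometric_of_lt_one (norm_nonneg q) hq).mul_left ‖c‖

theorem multipliable_one_sub_mul_pow (hq : ‖q‖ < 1) :
    Multipliable fun k : ℕ => 1 - c * q ^ k := by
  simpa [sub_eq_add_neg] using multipliable_one_add_of_summable (f := fun k => -(c * q ^ k))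
    (by simpa using summable_norm_mul_pow c hq)

theorem tendsto_qPoch_atTop (hq : ‖q‖ < 1) :
    Tendsto (qPoch c q) atTop (𝓝 (∏' k : ℕ, (1 - c * q ^ k))) :=
  (multipliable_one_sub_mul_pow c hq).hasProd.tendsto_prod_nat

theorem tprod_one_sub_mul_pow_ne_zero (hq : ‖q‖ < 1) (hc : ∀ k : ℕ, 1 - c * q ^ k ≠ 0) :
    ∏' k : ℕ, (1 - c * q ^ k) ≠ 0 := by
  simpa [sub_eq_add_neg] using tprod_one_add_ne_zero_of_summable (f := fun k => -(c * q ^ k))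
    (by simpa [sub_eq_add_neg] using hc) (by simpa using summable_norm_mul_pow c hq)

end InfiniteProduct

noncomputable def qBinomialCoeff (a q : ℂ) (n : ℕ) : ℂ := qPoch a q n / qPoch q q n

noncomputable def qBinomialSeries (a q y : ℂ) : ℂ := ∑' n : ℕ, qBinomialCoeff a q n * y ^ n

section Series

variable (a : ℂ) {q : ℂ}

theorem qBinomialCoeff_succ_mul (n : ℕ) (h : 1 - q ^ (n + 1) ≠ 0) :
    qBinomialCoeff a q (n + 1) * (1 - q ^ (n + 1)) = qBinomialCoeff a q n * (1 - a * q ^ n) := by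
  rw [qBinomialCoeff, qBinomialCoeff, qPoch_succ, qPoch_succ, ← pow_succ',
    div_mul_eq_mul_div, mul_div_mul_right _ _ h, div_mul_eq_mul_div]

theorem summable_norm_qBinomialCoeff_mul_pow (hq : ‖q‖ < 1) {y : ℂ} (hy : ‖y‖ < 1) :
    Summable fun n => ‖qBinomialCoeff a q n * y ^ n‖ := by
  obtain ⟨r, hyr, hr⟩ := exists_between hy
  have hq_pow : Tendsto (fun n : ℕ => q ^ n) atTop (𝓝 0) :=
    tendsto_pow_atTop_nhds_zero_of_norm_lt_one hq
  -- ratio test: consecutive terms have ratio `‖y‖ ‖1 - a q^n‖ / ‖1 - q^(n+1)‖ → ‖y‖ < r`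
  have hnum : Tendsto (fun n : ℕ => ‖y‖ * ‖1 - a * q ^ n‖) atTop (𝓝 ‖y‖) := by
    simpa using ((tendsto_const_nhds (x := (1 : ℂ)).sub (hq_pow.const_mul a)).norm.const_mul ‖y‖)
  have hden : Tendsto (fun n : ℕ => r * ‖1 - q ^ (n + 1)‖) atTop (𝓝 r) := by
    simpa using ((tendsto_const_nhds (x := (1 : ℂ)).sub
      ((tendsto_add_atTop_iff_nat 1).2 hq_pow)).norm.const_mul r)
  refine summable_of_ratio_norm_eventually_le hr ?_
  filter_upwards [hnum.eventually_lt hden hyr] with n hn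
  have hpos : 0 < ‖1 - q ^ (n + 1)‖ := norm_pos_iff.2 (one_sub_pow_succ_ne_zero hq n)
  have hrec := congrArg norm (qBinomialCoeff_succ_mul a n (one_sub_pow_succ_ne_zero hq n))
  rw [norm_mul, norm_mul] at hrec
  simp only [norm_norm]
  refine le_of_mul_le_mul_right ?_ hpos
  calc ‖qBinomialCoeff a q (n + 1) * y ^ (n + 1)‖ * ‖1 - q ^ (n + 1)‖
      = ‖qBinomialCoeff a q n * y ^ n‖ * (‖y‖ * ‖1 - a * q ^ n‖) := by
        simp only [norm_mul, norm_pow]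
        linear_combination ‖y‖ ^ (n + 1) * hrec
    _ ≤ ‖qBinomialCoeff a q n * y ^ n‖ * (r * ‖1 - q ^ (n + 1)‖) := by gcongr
    _ = r * ‖qBinomialCoeff a q n * y ^ n‖ * ‖1 - q ^ (n + 1)‖ := by ring

theorem hasSum_qBinomialSeries (hq : ‖q‖ < 1) {y : ℂ} (hy : ‖y‖ < 1) :
    HasSum (fun n => qBinomialCoeff a q n * y ^ n) (qBinomialSeries a q y) :=
  (summable_norm_qBinomialCoeff_mul_pow a hq hy).of_norm.hasSum

theorem qBinomialSeries_zero : qBinomialSeries a q 0 = 1 := by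
  rw [qBinomialSeries, tsum_eq_single 0 fun n hn => by simp [hn]]
  simp [qBinomialCoeff, qPoch]

theorem one_sub_mul_qBinomialSeries (hq : ‖q‖ < 1) {y : ℂ} (hy : ‖y‖ < 1) :
    (1 - y) * qBinomialSeries a q y = (1 - a * y) * qBinomialSeries a q (q * y) := by
  have hy' : ‖q * y‖ < 1 := by simpa using (norm_pow_mul_le hq.le y 1).trans_lt hy
  have h₁ := hasSum_qBinomialSeries a hq hy
  have h₂ := hasSum_qBinomialSeries a hq hy'
  -- `S(y) - S(qy) = ∑ c_(n+1) (1 - q^(n+1)) y^(n+1)`, by the recurrence `y S(y) - a y S(qy)`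
  have hdiff := (hasSum_nat_add_iff' 1).2 (h₁.sub h₂)
  have hshift := (h₁.mul_left y).sub (h₂.mul_left (a * y))
  have hterm (n : ℕ) :
      qBinomialCoeff a q (n + 1) * y ^ (n + 1) - qBinomialCoeff a q (n + 1) * (q * y) ^ (n + 1) =
        y * (qBinomialCoeff a q n * y ^ n) - a * y * (qBinomialCoeff a q n * (q * y) ^ n) := by
    linear_combination y ^ (n + 1) * qBinomialCoeff_succ_mul a n (one_sub_pow_succ_ne_zero hq n)
  simp only [hterm, Finset.range_one, Finset.sum_singleton, pow_zero, sub_self, sub_zero] at hdiff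
  linear_combination hdiff.unique hshift

theorem qPoch_mul_qBinomialSeries (hq : ‖q‖ < 1) {x : ℂ} (hx : ‖x‖ < 1) (N : ℕ) :
    qPoch x q N * qBinomialSeries a q x = qPoch (a * x) q N * qBinomialSeries a q (q ^ N * x) := by
  induction N with
  | zero => simp [qPoch]
  | succ N ih =>
    have h := one_sub_mul_qBinomialSeries a hq ((norm_pow_mul_le hq.le x N).trans_lt hx)
    rw [← mul_assoc q, ← pow_succ'] at h
    rw [qPoch_succ, qPoch_succ]
    linear_combination (1 - x * q ^ N) * ih + qPoch (a * x) q N * h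

theorem tendsto_qBinomialSeries_pow_mul (hq : ‖q‖ < 1) {x : ℂ} (hx : ‖x‖ < 1) :
    Tendsto (fun N => qBinomialSeries a q (q ^ N * x)) atTop (𝓝 1) := by
  have hlim : Tendsto (fun N : ℕ => q ^ N * x) atTop (𝓝 0) := by
    simpa using (tendsto_pow_atTop_nhds_zero_of_norm_lt_one hq).mul_const x
  rw [← qBinomialSeries_zero a (q := q)]
  refine tendsto_tsum_of_dominated_convergence (summable_norm_qBinomialCoeff_mul_pow a hq hx)
    (fun n => (hlim.pow n).const_mul _) (Eventually.of_forall fun N n => ?_)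
  rw [norm_mul, norm_mul, norm_pow, norm_pow]
  gcongr
  exact norm_pow_mul_le hq.le x N

end Series

/-- the q-binomial theorem: for `|q|<1`, `|x|<1`,
`(a x; q)_∞ / (x; q)_∞ = ∑_{n=0}^∞ ((a;q)_n / (q;q)_n) x^n`. -/
theorem q_binomial_theorem (a q x : ℂ) (hq : ‖q‖ < 1) (hx : ‖x‖ < 1) :
    (∏' k : ℕ, (1 - a * x * q ^ k)) / (∏' k : ℕ, (1 - x * q ^ k)) =
      ∑' n : ℕ, (qPoch a q n / qPoch q q n) * x ^ n := by
  have hx_prod : ∏' k : ℕ, (1 - x * q ^ k) ≠ 0 :=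
    tprod_one_sub_mul_pow_ne_zero x hq fun k => one_sub_ne_zero_of_norm_lt_one <| by
      simpa [mul_comm] using (norm_pow_mul_le hq.le x k).trans_lt hx
  have hlhs := (tendsto_qPoch_atTop x hq).mul_const (qBinomialSeries a q x)
  have hrhs := (tendsto_qPoch_atTop (a * x) hq).mul (tendsto_qBinomialSeries_pow_mul a hq hx)
  have hprod_eq := tendsto_nhds_unique hlhs
    (hrhs.congr fun N => (qPoch_mul_qBinomialSeries a hq hx N).symm)
  change _ = qBinomialSeries a q x
  rw [div_eq_iff hx_prod]
  linear_combination -hprod_eq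
end

section
/- The number of Schur functions appearing in the Schur expansion of ∏_{i=1}^N (1−x_i²) ∏_{1≤i<j≤N} (1−x_i x_j) is 2^N; more precisely, defining S^C_0 = {∅} and S^C_N = S^C_{N−1} ∪ {(N+1)^N − λ : λ ∈ S^C_{N−1}} (where (N+1)^N − λ denotes the complement of λ in the N×(N+1) rectangle), the cardinality |S^C_N| = 2^N. -/
/-- The complement of a partition `l` (given as a function `ℕ → ℕ` listing its parts)
in the rectangle with `N` rows and `N+1` columns: the partition with parts
`(N+1 − l_{N−i})` in reversed order (0-indexed: `i ↦ N+1 − l(N−1−i)` for `i < N`). -/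
def rectComplC (N : ℕ) (l : ℕ → ℕ) : ℕ → ℕ :=
  fun i => if i < N then N + 1 - l (N - 1 - i) else 0

/-- The family `S^C_N` of partitions indexing the Schur functions appearing in the
expansion of `∏_{i=1}^N (1−x_i²) ∏_{i<j} (1−x_i x_j)`, defined recursively by
`S^C_0 = {∅}` and `S^C_N = S^C_{N−1} ∪ {(N+1)^N − λ : λ ∈ S^C_{N−1}}`. -/
def SC : ℕ → Set (ℕ → ℕ)
  | 0 => {fun _ => 0}
  | (N + 1) => SC N ∪ (rectComplC (N + 1) '' SC N)

lemma SC_bound (N : ℕ) : ∀ l ∈ SC N, (∀ i, N ≤ i → l i = 0) ∧ (∀ i, l i ≤ N + 1) := by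
  induction N with
  | zero =>
    intro l hl
    simp only [SC, Set.mem_singleton_iff] at hl
    subst hl
    exact ⟨fun i _ => rfl, fun i => by simp⟩
  | succ N ih =>
    intro l hl
    simp only [SC, Set.mem_union, Set.mem_image] at hl
    rcases hl with hl | ⟨m, hm, rfl⟩
    · obtain ⟨h0, h1⟩ := ih l hl
      exact ⟨fun i hi => h0 i (by omega), fun i => (h1 i).trans (by omega)⟩
    · constructor
      · intro i hi; simp only [rectComplC]; rw [if_neg (by omega)]
      · intro i; simp only [rectComplC]; split <;> omega

lemma rectCompl_invol (N : ℕ) (l : ℕ → ℕ) (hl : l ∈ SC N) :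
    rectComplC (N + 1) (rectComplC (N + 1) l) = l := by
  obtain ⟨h0, h1⟩ := SC_bound N l hl
  funext i
  simp only [rectComplC]
  by_cases h : i < N + 1
  · rw [if_pos h, if_pos (by omega)]
    have he : N + 1 - 1 - (N + 1 - 1 - i) = i := by omega
    rw [he]
    have := h1 i
    omega
  · rw [if_neg h]
    exact (h0 i (by omega)).symm

lemma SC_finite (N : ℕ) : (SC N).Finite := by
  induction N with
  | zero => exact Set.finite_singleton _
  | succ N ih => exact ih.union (ih.image _)

/-- the number of Schur functions appearing in the Schur expansion of
`∏_{i=1}^N (1−x_i²) ∏_{1≤i<j≤N} (1−x_i x_j)` is `2^N`: `|S^C_N| = 2^N`. -/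
theorem card_SC (N : ℕ) : (SC N).ncard = 2 ^ N := by
  induction N with
  | zero => simp [SC]
  | succ N ih =>
    have hfin := SC_finite N
    have hdisj : Disjoint (SC N) (rectComplC (N + 1) '' SC N) := by
      rw [Set.disjoint_left]
      rintro l hl ⟨m, hm, heq⟩
      have hb := (SC_bound N l hl).2 0
      have hm0 := (SC_bound N m hm).1 N le_rfl
      have : rectComplC (N + 1) m 0 = N + 2 := by
        simp only [rectComplC]
        rw [if_pos (by omega)]
        have : N + 1 - 1 - 0 = N := by omega
        rw [this, hm0]
        omega
      rw [heq] at this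
      omega
    have hinj : Set.InjOn (rectComplC (N + 1)) (SC N) := by
      intro a ha b hb heq
      rw [← rectCompl_invol N a ha, ← rectCompl_invol N b hb, heq]
    show (SC N ∪ rectComplC (N + 1) '' SC N).ncard = 2 ^ (N + 1)
    rw [Set.ncard_union_eq hdisj hfin (hfin.image _), Set.ncard_image_of_injOn hinj, ih]
    ring
end
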